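/- arXiv:1411.3500 — 6 statements merged into one kernel-verified Lean document; each statement's English description precedes it below -/
import Mathlib

section
/- Let E be a complete locally convex Hausdorff space and Λ a Hilbert sequence space. Then every Λ-frame (g_i) ⊆ E' for E is automatically a frame for E with respect to Λ, i.e. the range U(E) of the analysis operator is complemented in Λ. -/
/-!
`U` is an additive embedding of uniform groups, hence a uniform embedding, so `U(E)` is complete
because `E` is; a complete subspace of a Hilbert space has an orthogonal complement, and
`S` is the orthogonal projection onto `U(E)` followed by the inverse of `U : E ≃ U(E)`.
-/

open Topology

namespace ContinuousLinearMap

variable {R E F : Type*} [Ring R] [TopologicalSpace E] [AddCommGroup E] [Module R E]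
  [TopologicalSpace F] [AddCommGroup F] [Module R F]

noncomputable def equivRangeOfIsEmbedding (f : E →L[R] F) (hf : IsEmbedding f) :
    E ≃L[R] f.range :=
  let e := LinearEquiv.ofInjective (f : E →ₗ[R] F) hf.injective
  { e with
    continuous_toFun := f.continuous.subtype_mk _
    continuous_invFun := by
      have hcomp : f ∘ e.symm = Subtype.val :=
        funext fun y ↦ congrArg Subtype.val (e.apply_symm_apply y)
      exact hf.continuous_iff.mpr (hcomp ▸ continuous_subtype_val) }

theorem HasLeftInverse.of_isEmbedding_of_closedComplemented_range {f : E →L[R] F}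
    (hf : IsEmbedding f) (hrange : f.range.ClosedComplemented) :
    f.HasLeftInverse := by
  obtain ⟨p, hp⟩ := hrange
  refine ⟨((f.equivRangeOfIsEmbedding hf).symm : _ →L[R] E).comp p, fun x ↦ ?_⟩
  have hpx : p (f x) = f.equivRangeOfIsEmbedding hf x := hp ⟨f x, LinearMap.mem_range_self _ x⟩
  simp [hpx]

end ContinuousLinearMap

theorem Submodule.ClosedComplemented.of_isComplete {𝕜 E : Type*} [RCLike 𝕜]
    [NormedAddCommGroup E] [InnerProductSpace 𝕜 E] {K : Submodule 𝕜 E}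
    (hK : IsComplete (K : Set E)) : K.ClosedComplemented :=
  haveI := hK.completeSpace_coe
  K.isTopCompl_orthogonal.closedComplemented

theorem ContinuousLinearMap.isComplete_range_of_isEmbedding {R E F : Type*} [Semiring R]
    [UniformSpace E] [AddCommGroup E] [IsUniformAddGroup E] [CompleteSpace E] [Module R E]
    [UniformSpace F] [AddCommGroup F] [IsUniformAddGroup F] [Module R F]
    {f : E →L[R] F} (hf : IsEmbedding f) : IsComplete (f.range : Set F) :=
  (AddMonoidHom.isUniformInducing_of_isInducing (f := (f : E →+ F)) hf.isInducing).isComplete_range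

theorem stmt3_general {E Λ : Type*}
    -- `E` a complete Hausdorff locally convex space
    [AddCommGroup E] [Module ℝ E] [UniformSpace E] [IsUniformAddGroup E]
    [CompleteSpace E]
    -- `Λ` a Hilbert sequence space
    [NormedAddCommGroup Λ] [InnerProductSpace ℝ Λ]
    -- the `Λ`-frame `(g_i)` with analysis operator `U`
    (U : E →L[ℝ] Λ) (hframe : IsEmbedding U) :
    ∃ S : Λ →L[ℝ] E, S.comp U = ContinuousLinearMap.id ℝ E := by
  have hrange : U.range.ClosedComplemented :=
    .of_isComplete (U.isComplete_range_of_isEmbedding hframe)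
  obtain ⟨S, hS⟩ := ContinuousLinearMap.HasLeftInverse.of_isEmbedding_of_closedComplemented_range
    hframe hrange
  exact ⟨S, ContinuousLinearMap.ext hS⟩

theorem stmt3 {E Λ : Type*}
    -- `E` a complete Hausdorff locally convex space
    [AddCommGroup E] [Module ℝ E] [UniformSpace E] [IsUniformAddGroup E]
    [ContinuousSMul ℝ E] [CompleteSpace E] [T2Space E] [LocallyConvexSpace ℝ E]
    -- `Λ` a Hilbert sequence space
    [NormedAddCommGroup Λ] [InnerProductSpace ℝ Λ] [CompleteSpace Λ]
    (ι : Λ →L[ℝ] (ℕ → ℝ)) (hι : Function.Injective ι)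
    (hφ : ∀ y : ℕ → ℝ, (Function.support y).Finite → ∃ a : Λ, ι a = y)
    -- the `Λ`-frame `(g_i)` with analysis operator `U`
    (g : ℕ → E →L[ℝ] ℝ) (U : E →L[ℝ] Λ) (hUg : ∀ x i, ι (U x) i = g i x)
    (hframe : IsEmbedding U) :
    ∃ S : Λ →L[ℝ] E, S.comp U = ContinuousLinearMap.id ℝ E :=
  stmt3_general U hframe
end

section
/- Let E be a barrelled locally convex space, Λ₁, Λ₂ sequence spaces, (g_i) ⊆ E' a Λ₁-Bessel sequence and (h_i) ⊆ E' a Λ₂-frame. Define (f_k) ⊆ E' by f_{2i-1} = g_i and f_{2i} = h_i, and let Λ = { (α_k) ∈ ω : (α_{2k-1}) ∈ Λ₁ and (α_{2k}) ∈ Λ₂ } with the seminorms ‖α‖_{p,q} = p((α_{2k-1})_k) + q((α_{2k})_k) for p ∈ cs(Λ₁), q ∈ cs(Λ₂). Then (f_k) is a Λ-frame for E. -/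
open Topology

theorem Topology.IsEmbedding.prodMk_of_right {X Y Z : Type*} [TopologicalSpace X]
    [TopologicalSpace Y] [TopologicalSpace Z] {f : X → Y} {g : X → Z} (hf : Continuous f)
    (hg : IsEmbedding g) : IsEmbedding fun x => (f x, g x) :=
  .of_comp (hf.prodMk hg.continuous) continuous_snd hg

theorem stmt4_general {E Λ₁ Λ₂ : Type*}
    [AddCommGroup E] [Module ℝ E] [TopologicalSpace E]
    [AddCommGroup Λ₁] [Module ℝ Λ₁] [TopologicalSpace Λ₁]
    [AddCommGroup Λ₂] [Module ℝ Λ₂] [TopologicalSpace Λ₂]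
    -- `(g_i)` is `Λ₁`-Bessel: its analysis operator `U₁` is continuous
    (U₁ : E →L[ℝ] Λ₁)
    -- `(h_i)` is a `Λ₂`-frame: its analysis operator `U₂` is an embedding
    (U₂ : E →L[ℝ] Λ₂)
    (hframe₂ : IsEmbedding U₂) :
    -- the interleaved analysis operator is an embedding, i.e. `(f_k)` is a `Λ`-frame
    IsEmbedding (fun x : E => ((U₁ x, U₂ x) : Λ₁ × Λ₂)) :=
  hframe₂.prodMk_of_right U₁.continuous

theorem stmt4 {E Λ₁ Λ₂ : Type*}
    [AddCommGroup E] [Module ℝ E] [TopologicalSpace E] [IsTopologicalAddGroup E]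
    [ContinuousSMul ℝ E] [T2Space E] [LocallyConvexSpace ℝ E] [BarrelledSpace ℝ E]
    [AddCommGroup Λ₁] [Module ℝ Λ₁] [TopologicalSpace Λ₁] [IsTopologicalAddGroup Λ₁]
    [ContinuousSMul ℝ Λ₁] [T2Space Λ₁] [LocallyConvexSpace ℝ Λ₁]
    [AddCommGroup Λ₂] [Module ℝ Λ₂] [TopologicalSpace Λ₂] [IsTopologicalAddGroup Λ₂]
    [ContinuousSMul ℝ Λ₂] [T2Space Λ₂] [LocallyConvexSpace ℝ Λ₂]
    -- `Λ₁`, `Λ₂` are sequence spaces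
    (ι₁ : Λ₁ →L[ℝ] (ℕ → ℝ)) (hι₁ : Function.Injective ι₁)
    (hφ₁ : ∀ y : ℕ → ℝ, (Function.support y).Finite → ∃ a : Λ₁, ι₁ a = y)
    (ι₂ : Λ₂ →L[ℝ] (ℕ → ℝ)) (hι₂ : Function.Injective ι₂)
    (hφ₂ : ∀ y : ℕ → ℝ, (Function.support y).Finite → ∃ a : Λ₂, ι₂ a = y)
    -- `(g_i)` is `Λ₁`-Bessel: its analysis operator `U₁` is continuous
    (g : ℕ → E →L[ℝ] ℝ) (U₁ : E →L[ℝ] Λ₁) (hU₁ : ∀ x i, ι₁ (U₁ x) i = g i x)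
    -- `(h_i)` is a `Λ₂`-frame: its analysis operator `U₂` is an embedding
    (h : ℕ → E →L[ℝ] ℝ) (U₂ : E →L[ℝ] Λ₂) (hU₂ : ∀ x i, ι₂ (U₂ x) i = h i x)
    (hframe₂ : IsEmbedding U₂) :
    -- the interleaved analysis operator is an embedding, i.e. `(f_k)` is a `Λ`-frame
    IsEmbedding (fun x : E => ((U₁ x, U₂ x) : Λ₁ × Λ₂)) :=
  stmt4_general U₁ U₂ hframe₂
end

section
/- Let E be a barrelled and complete locally convex Hausdorff space with a Schauder frame ((x_i'), (x_i)) and let Λ = { α ∈ ω : Σ_i α_i x_i converges in E } with seminorms q_p(α) = sup_n p(Σ_{i=1}^n α_i x_i) for p ∈ cs(E). Then (x_i') is a frame for E with respect to Λ: the analysis operator U : E → Λ, x ↦ (x_i'(x))_i, and the synthesis operator S : Λ → E, α ↦ Σ_i α_i x_i, are continuous and satisfy S ∘ U = id_E. -/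
/-!
STATEMENT 5: Let `E` be a barrelled complete Hausdorff locally convex space with a Schauder
frame `((x_i'), (x_i))` and let `Λ = {α ∈ ω : ∑ α_i x_i converges in E}` with the seminorms
`q_p(α) = sup_n p(∑_{i<n} α_i x_i)`, `p ∈ cs(E)`.  Then `(x_i')` is a frame for `E` with
respect to `Λ`: the analysis operator `U x = (x_i'(x))_i` and the synthesis operator
`S α = ∑ α_i x_i` are continuous linear and `S ∘ U = id_E`.

The topology of `Λ` given by the seminorms `q_p` is the topology induced by the map
`α ↦ (partial sums of ∑ αᵢ xᵢ)` into `ℕ →ᵤ E` (uniform convergence over `n`). -/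

open Filter Topology

variable {E : Type*} [AddCommGroup E] [Module ℝ E] [UniformSpace E] [IsUniformAddGroup E]
  [ContinuousSMul ℝ E]

/-- The sequence space associated to the family `(x_i)`:
all `α` such that `∑ αᵢ xᵢ` converges in `E`. -/
noncomputable def SFSeq (x : ℕ → E) : Submodule ℝ (ℕ → ℝ) where
  carrier := {α | ∃ l : E,
    Tendsto (fun n => ∑ i ∈ Finset.range n, α i • x i) atTop (𝓝 l)}
  zero_mem' := ⟨0, by simpa using (tendsto_const_nhds : Tendsto (fun _ : ℕ => (0:E)) atTop _)⟩
  add_mem' := by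
    rintro a b ⟨l, hl⟩ ⟨m, hm⟩
    exact ⟨l + m, by simpa [Finset.sum_add_distrib, add_smul] using hl.add hm⟩
  smul_mem' := by
    rintro c a ⟨l, hl⟩
    refine ⟨c • l, ?_⟩
    simpa [Finset.smul_sum, smul_smul] using hl.const_smul c

/-- The topology of `Λ` given by the seminorms `q_p(α) = sup_n p(∑_{i<n} αᵢ xᵢ)`:
the topology induced from uniform convergence of the partial-sum sequences. -/
noncomputable def SFSeqTop (x : ℕ → E) : TopologicalSpace (SFSeq x) :=
  TopologicalSpace.induced
    (fun α : SFSeq x =>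
      UniformFun.ofFun fun n => ∑ i ∈ Finset.range n, (α : ℕ → ℝ) i • x i)
    inferInstance

/-!
The analysis operator `U v = (x'ᵢ v)ᵢ` is continuous by Banach–Steinhaus: the partial-sum
operators `Tₙ v = ∑_{i<n} x'ᵢ(v) xᵢ` converge pointwise on the barrelled space `E`, hence are
equicontinuous, which is exactly continuity of `v ↦ (Tₙ v)ₙ` into `ℕ →ᵤ E`. The synthesis
operator is continuous because taking the limit of a convergent sequence is continuous for
uniform convergence, and `S (U v) = v` is the frame expansion.
-/

open scoped UniformConvergence

theorem continuous_of_tendsto_of_continuous_uniformFun {X ι F : Type*} [TopologicalSpace X]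
    [UniformSpace F] {l : Filter ι} [l.NeBot] {G : X → ι →ᵤ F} (hG : Continuous G) {L : X → F}
    (hL : ∀ a, Tendsto (UniformFun.toFun (G a)) l (𝓝 (L a))) : Continuous L := by
  refine continuous_iff_continuousAt.mpr fun a => ?_
  refine (nhds_basis_uniformity' uniformity_hasBasis_closed).tendsto_right_iff.mpr
    fun V ⟨hV, hVc⟩ => ?_
  filter_upwards [hG.continuousAt ((UniformFun.hasBasis_nhds ι F (G a)).mem_of_mem hV)]
    with b (hab : ∀ i, (G a i, G b i) ∈ V)
  exact hVc.mem_of_tendsto ((hL a).prodMk_nhds (hL b)) (Eventually.of_forall hab)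

theorem continuous_uniformFun_of_tendsto {𝕜 F G : Type*} [NontriviallyNormedField 𝕜]
    [AddCommGroup F] [Module 𝕜 F] [UniformSpace F] [IsUniformAddGroup F] [ContinuousSMul 𝕜 F]
    [BarrelledSpace 𝕜 F] [AddCommGroup G] [Module 𝕜 G] [UniformSpace G] [IsUniformAddGroup G]
    [ContinuousSMul 𝕜 G] [PolynormableSpace 𝕜 G] {T : ℕ → F →L[𝕜] G} {f : F → G}
    (hT : ∀ v, Tendsto (fun n => T n v) atTop (𝓝 (f v))) :
    Continuous fun v => UniformFun.ofFun fun n => T n v :=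
  equicontinuous_iff_continuous.mp
    (PolynormableSpace.banach_steinhaus fun v => (hT v).isVonNBounded_range 𝕜).equicontinuous

def IsSchauderFrame (x' : ℕ → E →L[ℝ] ℝ) (x : ℕ → E) : Prop :=
  ∀ v : E, Tendsto (fun n => ∑ i ∈ Finset.range n, x' i v • x i) atTop (𝓝 v)

namespace SFSeq

section Analysis

variable {x' : ℕ → E →L[ℝ] ℝ} {x : ℕ → E}

def analysis (hSF : IsSchauderFrame x' x) : E →ₗ[ℝ] SFSeq x where
  toFun v := ⟨fun i => x' i v, v, hSF v⟩
  map_add' v w := by ext i; simp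
  map_smul' c v := by ext i; simp

theorem continuous_analysis [LocallyConvexSpace ℝ E] [BarrelledSpace ℝ E]
    (hSF : IsSchauderFrame x' x) : Continuous[_, SFSeqTop x] (analysis hSF) := by
  refine continuous_induced_rng.mpr ?_
  have hT : ∀ n v, (∑ i ∈ Finset.range n, (x' i).smulRight (x i)) v =
      ∑ i ∈ Finset.range n, x' i v • x i := by
    simp only [sum_apply, ContinuousLinearMap.smulRight_apply, implies_true]
  simpa only [Function.comp_def, analysis, LinearMap.coe_mk, AddHom.coe_mk, hT] using
    continuous_uniformFun_of_tendsto (T := fun n => ∑ i ∈ Finset.range n, (x' i).smulRight (x i))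
      fun v => by simpa only [hT] using hSF v

end Analysis

section Synthesis

variable [T2Space E]

noncomputable def synthesis (x : ℕ → E) : SFSeq x →ₗ[ℝ] E where
  toFun α := limUnder atTop fun n => ∑ i ∈ Finset.range n, (α : ℕ → ℝ) i • x i
  map_add' α β := by
    refine tendsto_nhds_unique (tendsto_nhds_limUnder (α + β).2) ?_
    simpa only [Submodule.coe_add, Pi.add_apply, add_smul, Finset.sum_add_distrib] using
      (tendsto_nhds_limUnder α.2).add (tendsto_nhds_limUnder β.2)
  map_smul' c α := by
    rw [RingHom.id_apply]
    refine tendsto_nhds_unique (tendsto_nhds_limUnder (c • α).2) ?_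
    simpa only [Submodule.coe_smul, Pi.smul_apply, smul_eq_mul, ← smul_smul,
      ← Finset.smul_sum] using (tendsto_nhds_limUnder α.2).const_smul c

theorem tendsto_synthesis {x : ℕ → E} (α : SFSeq x) :
    Tendsto (fun n => ∑ i ∈ Finset.range n, (α : ℕ → ℝ) i • x i) atTop (𝓝 (synthesis x α)) :=
  tendsto_nhds_limUnder α.2

theorem continuous_synthesis (x : ℕ → E) : Continuous[SFSeqTop x, _] (synthesis x) :=
  letI := SFSeqTop x
  continuous_of_tendsto_of_continuous_uniformFun continuous_induced_dom tendsto_synthesis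

theorem synthesis_analysis {x' : ℕ → E →L[ℝ] ℝ} {x : ℕ → E} (hSF : IsSchauderFrame x' x)
    (v : E) : synthesis x (analysis hSF v) = v :=
  tendsto_nhds_unique (tendsto_synthesis _) (hSF v)

end Synthesis

end SFSeq

theorem stmt5_general [T2Space E] [LocallyConvexSpace ℝ E] [BarrelledSpace ℝ E]
    (x' : ℕ → E →L[ℝ] ℝ) (x : ℕ → E)
    -- `((x_i'), (x_i))` is a Schauder frame of `E`
    (hSF : ∀ v : E,
      Tendsto (fun n => ∑ i ∈ Finset.range n, x' i v • x i) atTop (𝓝 v)) :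
    ∃ (U : E →ₗ[ℝ] SFSeq x) (S : SFSeq x →ₗ[ℝ] E),
      (∀ v i, (U v : ℕ → ℝ) i = x' i v) ∧
      (∀ α : SFSeq x,
        Tendsto (fun n => ∑ i ∈ Finset.range n, (α : ℕ → ℝ) i • x i) atTop (𝓝 (S α))) ∧
      Continuous[_, SFSeqTop x] U ∧
      Continuous[SFSeqTop x, _] S ∧
      ∀ v : E, S (U v) = v :=
  ⟨SFSeq.analysis hSF, SFSeq.synthesis x, fun _ _ => rfl, SFSeq.tendsto_synthesis,
    SFSeq.continuous_analysis hSF, SFSeq.continuous_synthesis x, SFSeq.synthesis_analysis hSF⟩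

theorem stmt5 [CompleteSpace E] [T2Space E] [LocallyConvexSpace ℝ E] [BarrelledSpace ℝ E]
    (x' : ℕ → E →L[ℝ] ℝ) (x : ℕ → E)
    -- `((x_i'), (x_i))` is a Schauder frame of `E`
    (hSF : ∀ v : E,
      Tendsto (fun n => ∑ i ∈ Finset.range n, x' i v • x i) atTop (𝓝 v)) :
    ∃ (U : E →ₗ[ℝ] SFSeq x) (S : SFSeq x →ₗ[ℝ] E),
      (∀ v i, (U v : ℕ → ℝ) i = x' i v) ∧
      (∀ α : SFSeq x,
        Tendsto (fun n => ∑ i ∈ Finset.range n, (α : ℕ → ℝ) i • x i) atTop (𝓝 (S α))) ∧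
      Continuous[_, SFSeqTop x] U ∧
      Continuous[SFSeqTop x, _] S ∧
      ∀ v : E, S (U v) = v :=
  stmt5_general x' x hSF
end

section
/- Let E be a barrelled locally convex space and Λ a barrelled sequence space whose unit vectors form a Schauder basis. If (g_i) ⊆ E' is a Λ-Bessel sequence which is also a Λ'-representing system for (E', μ(E',E)), then (g_i) is a frame in the weak sense: the analysis operator U : (E, σ(E,E')) → (Λ, σ(Λ,Λ')) is a topological isomorphism onto its range. -/
/-!
Each `x' ∈ E'` is the Mackey limit of `∑ dᵢ gᵢ` with `(dᵢ) ∈ Λ'`; Mackey convergence implies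
pointwise convergence, and expanding `U x` in the unit-vector basis shows that the partial sums
at `x` converge to `d (U x)`. Hence every `x'` factors as `d ∘ U`, i.e. the transpose of `U` is
onto `E'`, which is exactly the statement that `σ(E, E')` is induced by `σ(Λ, Λ')` along `U`.
Injectivity of `U` follows because `E'` separates the points of `E`.
-/

open Filter Topology

/-- The weak topology `σ(E, E')`. -/
noncomputable def weakTop (E : Type*) [AddCommGroup E] [Module ℝ E] [TopologicalSpace E] :
    TopologicalSpace E :=
  TopologicalSpace.induced (fun x => fun f : E →L[ℝ] ℝ => f x) Pi.topologicalSpace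

/-- The Mackey topology `μ(E', E)` on the dual: uniform convergence on absolutely convex
weakly compact subsets of `E`. -/
noncomputable def mackeyTop (E : Type*) [AddCommGroup E] [Module ℝ E] [TopologicalSpace E] :
    TopologicalSpace (E →L[ℝ] ℝ) :=
  ⨅ K : {K : Set E // Convex ℝ K ∧ Balanced ℝ K ∧ @IsCompact E (weakTop E) K},
    TopologicalSpace.induced (fun f => UniformFun.ofFun fun x : K.1 => f x) inferInstance

theorem Balanced.image_linearMap {𝕜 E F : Type*} [SeminormedRing 𝕜] [AddCommMonoid E]
    [AddCommMonoid F] [Module 𝕜 E] [Module 𝕜 F] {s : Set E} (hs : Balanced 𝕜 s)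
    (f : E →ₗ[𝕜] F) : Balanced 𝕜 (f '' s) := fun a ha => by
  rw [← image_smul_set]
  exact Set.image_mono (hs a ha)

section WeakTopology

variable {E F : Type*} [AddCommGroup E] [Module ℝ E] [TopologicalSpace E]
  [AddCommGroup F] [Module ℝ F] [TopologicalSpace F]

theorem weakTop_eq_iInf :
    weakTop E = ⨅ f : E →L[ℝ] ℝ, TopologicalSpace.induced f inferInstance := by
  rw [weakTop, Pi.topologicalSpace, induced_iInf]
  exact iInf_congr fun f => by rw [induced_compose]; rfl

theorem continuous_weakTop_rng {X : Type*} [TopologicalSpace X] {φ : X → E}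
    (h : ∀ f : E →L[ℝ] ℝ, Continuous fun x => f (φ x)) : Continuous[_, weakTop E] φ :=
  continuous_induced_rng.2 (continuous_pi h)

theorem induced_weakTop_of_forall_exists_eq_comp (U : E →L[ℝ] F)
    (hU : ∀ f : E →L[ℝ] ℝ, ∃ h : F →L[ℝ] ℝ, f = h.comp U) :
    TopologicalSpace.induced U (weakTop F) = weakTop E := by
  simp only [weakTop_eq_iInf, induced_iInf, induced_compose]
  refine le_antisymm (le_iInf fun f => ?_) (le_iInf fun h => iInf_le_of_le (h.comp U) le_rfl)
  obtain ⟨h, rfl⟩ := hU f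
  exact iInf_le_of_le h le_rfl

theorem isEmbedding_weakTop_of_forall_exists_eq_comp [SeparatingDual ℝ E] (U : E →L[ℝ] F)
    (hU : ∀ f : E →L[ℝ] ℝ, ∃ h : F →L[ℝ] ℝ, f = h.comp U) :
    @IsEmbedding E F (weakTop E) (weakTop F) U := by
  refine @IsEmbedding.mk E F (weakTop E) (weakTop F) U
    (@IsInducing.mk E F (weakTop E) (weakTop F) U
      (induced_weakTop_of_forall_exists_eq_comp U hU).symm) fun a b hab => ?_
  by_contra hne
  obtain ⟨f, hf⟩ := SeparatingDual.exists_separating_of_ne (R := ℝ) hne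
  obtain ⟨h, rfl⟩ := hU f
  exact hf (congrArg h hab)

end WeakTopology

section MackeyTopology

variable {E : Type*} [AddCommGroup E] [Module ℝ E] [TopologicalSpace E]

theorem mackeyTop_le_induced {K : Set E} (hconv : Convex ℝ K) (hbal : Balanced ℝ K)
    (hK : @IsCompact E (weakTop E) K) :
    mackeyTop E ≤ TopologicalSpace.induced
      (fun f : E →L[ℝ] ℝ => UniformFun.ofFun fun x : K => f x) inferInstance :=
  iInf_le (fun K : {K : Set E // Convex ℝ K ∧ Balanced ℝ K ∧ @IsCompact E (weakTop E) K} =>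
    TopologicalSpace.induced (fun f : E →L[ℝ] ℝ => UniformFun.ofFun fun x : K.1 => f x)
      inferInstance) ⟨K, hconv, hbal, hK⟩

theorem continuous_apply_mackeyTop (x : E) :
    Continuous[mackeyTop E, _] fun f : E →L[ℝ] ℝ => f x := by
  let K : Set E := LinearMap.toSpanSingleton ℝ E x '' Metric.closedBall 0 1
  have hK : @IsCompact E (weakTop E) K :=
    @IsCompact.image ℝ E _ (weakTop E) _ _ (isCompact_closedBall 0 1)
      (continuous_weakTop_rng fun f => by
        simp only [LinearMap.toSpanSingleton_apply, map_smul, smul_eq_mul]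
        fun_prop)
  have hxK : x ∈ K := ⟨1, by simp, one_smul ℝ x⟩
  have hrestrict : Continuous[mackeyTop E, _]
      fun f : E →L[ℝ] ℝ => UniformFun.ofFun fun y : K => f y :=
    continuous_le_dom (mackeyTop_le_induced
      ((convex_closedBall 0 1).linear_image _)
      (balanced_closedBall_zero.image_linearMap _) hK) continuous_induced_dom
  exact @Continuous.comp _ _ _ (mackeyTop E) _ _ _ _
    (UniformFun.uniformContinuous_eval ℝ (⟨x, hxK⟩ : K)).continuous hrestrict

end MackeyTopology

theorem eq_comp_of_tendsto_sum_smul_apply {E Λ : Type*} [AddCommGroup E] [Module ℝ E]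
    [TopologicalSpace E] [AddCommGroup Λ] [Module ℝ Λ] [TopologicalSpace Λ]
    (c : Λ → ℕ → ℝ) (e : ℕ → Λ)
    (hbasis : ∀ a, Tendsto (fun n => ∑ i ∈ Finset.range n, c a i • e i) atTop (𝓝 a))
    (g : ℕ → E →L[ℝ] ℝ) (U : E →L[ℝ] Λ) (hUg : ∀ x i, c (U x) i = g i x)
    (h : Λ →L[ℝ] ℝ) (x' : E →L[ℝ] ℝ)
    (hx' : ∀ x, Tendsto (fun n => (∑ i ∈ Finset.range n, h (e i) • g i) x) atTop (𝓝 (x' x))) :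
    x' = h.comp U := by
  ext x
  have hsum : ∀ n, (∑ i ∈ Finset.range n, h (e i) • g i) x
      = h (∑ i ∈ Finset.range n, c (U x) i • e i) := fun n => by
    simp only [map_sum, sum_apply, FunLike.coe_smul, Pi.smul_apply,
      map_smul, smul_eq_mul, hUg, mul_comm]
  refine tendsto_nhds_unique (hx' x) ?_
  rw [ContinuousLinearMap.comp_apply, funext hsum]
  exact (h.continuous.tendsto _).comp (hbasis (U x))

theorem stmt8_general {E Λ : Type*}
    [AddCommGroup E] [Module ℝ E] [TopologicalSpace E] [IsTopologicalAddGroup E]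
    [ContinuousSMul ℝ E] [T2Space E] [LocallyConvexSpace ℝ E]
    [AddCommGroup Λ] [Module ℝ Λ] [TopologicalSpace Λ]
    (ι : Λ →L[ℝ] (ℕ → ℝ))
    (e : ℕ → Λ)
    (hbasis : ∀ a : Λ,
      Tendsto (fun n => ∑ i ∈ Finset.range n, ι a i • e i) atTop (𝓝 a))
    -- `(g_i)` is `Λ`-Bessel, with analysis operator `U`
    (g : ℕ → E →L[ℝ] ℝ) (U : E →L[ℝ] Λ) (hUg : ∀ x i, ι (U x) i = g i x)
    -- `(g_i)` is a `Λ'`-representing system for `(E', μ(E',E))`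
    (hrep : ∀ x' : E →L[ℝ] ℝ, ∃ h : Λ →L[ℝ] ℝ,
      Tendsto (fun n => ∑ i ∈ Finset.range n, h (e i) • g i) atTop
        (@nhds _ (mackeyTop E) x')) :
    @IsEmbedding E Λ (weakTop E) (weakTop Λ) U := by
  refine isEmbedding_weakTop_of_forall_exists_eq_comp U fun x' => ?_
  obtain ⟨h, hh⟩ := hrep x'
  exact ⟨h, eq_comp_of_tendsto_sum_smul_apply ι e hbasis g U hUg h x' fun x =>
    (@Continuous.tendsto _ _ (mackeyTop E) _ _ (continuous_apply_mackeyTop x) x').comp hh⟩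

theorem stmt8 {E Λ : Type*}
    [AddCommGroup E] [Module ℝ E] [TopologicalSpace E] [IsTopologicalAddGroup E]
    [ContinuousSMul ℝ E] [T2Space E] [LocallyConvexSpace ℝ E] [BarrelledSpace ℝ E]
    [AddCommGroup Λ] [Module ℝ Λ] [TopologicalSpace Λ] [IsTopologicalAddGroup Λ]
    [ContinuousSMul ℝ Λ] [T2Space Λ] [LocallyConvexSpace ℝ Λ] [BarrelledSpace ℝ Λ]
    (ι : Λ →L[ℝ] (ℕ → ℝ)) (hι : Function.Injective ι)
    (hφ : ∀ y : ℕ → ℝ, (Function.support y).Finite → ∃ a : Λ, ι a = y)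
    (e : ℕ → Λ) (he : ∀ i, ι (e i) = Pi.single i 1)
    (hbasis : ∀ a : Λ,
      Tendsto (fun n => ∑ i ∈ Finset.range n, ι a i • e i) atTop (𝓝 a))
    -- `(g_i)` is `Λ`-Bessel, with analysis operator `U`
    (g : ℕ → E →L[ℝ] ℝ) (U : E →L[ℝ] Λ) (hUg : ∀ x i, ι (U x) i = g i x)
    -- `(g_i)` is a `Λ'`-representing system for `(E', μ(E',E))`
    (hrep : ∀ x' : E →L[ℝ] ℝ, ∃ h : Λ →L[ℝ] ℝ,
      Tendsto (fun n => ∑ i ∈ Finset.range n, h (e i) • g i) atTop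
        (@nhds _ (mackeyTop E) x')) :
    @IsEmbedding E Λ (weakTop E) (weakTop Λ) U :=
  stmt8_general ι e hbasis g U hUg hrep
end

section
/- Let E be a barrelled and complete locally convex space and Λ a barrelled sequence space whose unit vectors form a Schauder basis. Suppose (g_i) ⊆ E' is Λ-Bessel. Then (g_i) is a frame for E with respect to Λ (i.e., there exists continuous S : Λ → E with S ∘ U = id_E) if and only if there exists a sequence (f_i) ⊆ E such that Σ_i c_i f_i converges in E for every (c_i) ∈ Λ and x = Σ_i g_i(x) f_i for every x ∈ E. -/
/-!
If `S` is a continuous left inverse of `U`, put `f_i = S e_i`: applying `S` to the basis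
expansions `c = ∑ c_i e_i` and `U x = ∑ g_i(x) e_i` gives both series. Conversely, the
partial sums `c ↦ ∑_{i<n} c_i f_i` are continuous and converge pointwise on the barrelled
space `Λ`, so by Banach–Steinhaus their limit `S` is continuous, and `S (U x) = x` by
uniqueness of limits.
-/

open Filter Topology

section Synthesis

variable {𝕜 Λ E : Type*} [NontriviallyNormedField 𝕜]
  [AddCommGroup Λ] [Module 𝕜 Λ] [TopologicalSpace Λ]
  [AddCommGroup E] [Module 𝕜 E] [TopologicalSpace E]

theorem ContinuousLinearMap.tendsto_sum_smul_map (S : Λ →L[𝕜] E) {c : ℕ → 𝕜} {e : ℕ → Λ}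
    {a : Λ} (h : Tendsto (fun n => ∑ i ∈ Finset.range n, c i • e i) atTop (𝓝 a)) :
    Tendsto (fun n => ∑ i ∈ Finset.range n, c i • S (e i)) atTop (𝓝 (S a)) := by
  simpa only [Function.comp_def, map_sum, map_smul] using (S.continuous.tendsto a).comp h

def partialSynthesis [IsTopologicalAddGroup E] [ContinuousSMul 𝕜 E]
    (φ : ℕ → Λ →L[𝕜] 𝕜) (f : ℕ → E) (n : ℕ) : Λ →L[𝕜] E :=
  ∑ i ∈ Finset.range n, (φ i).smulRight (f i)

theorem partialSynthesis_apply [IsTopologicalAddGroup E] [ContinuousSMul 𝕜 E]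
    (φ : ℕ → Λ →L[𝕜] 𝕜) (f : ℕ → E) (n : ℕ) (c : Λ) :
    partialSynthesis φ f n c = ∑ i ∈ Finset.range n, φ i c • f i := by
  simp [partialSynthesis]

theorem exists_continuousLinearMap_tendsto_sum_smul [IsTopologicalAddGroup Λ]
    [ContinuousSMul 𝕜 Λ] [BarrelledSpace 𝕜 Λ]
    [IsTopologicalAddGroup E] [ContinuousSMul 𝕜 E] [T2Space E] [PolynormableSpace 𝕜 E]
    (φ : ℕ → Λ →L[𝕜] 𝕜) (f : ℕ → E)
    (hconv : ∀ c : Λ, ∃ l : E,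
      Tendsto (fun n => ∑ i ∈ Finset.range n, φ i c • f i) atTop (𝓝 l)) :
    ∃ S : Λ →L[𝕜] E, ∀ c : Λ,
      Tendsto (fun n => ∑ i ∈ Finset.range n, φ i c • f i) atTop (𝓝 (S c)) := by
  let : UniformSpace Λ := IsTopologicalAddGroup.rightUniformSpace Λ
  have : IsUniformAddGroup Λ := isUniformAddGroup_of_addCommGroup
  let : UniformSpace E := IsTopologicalAddGroup.rightUniformSpace E
  have : IsUniformAddGroup E := isUniformAddGroup_of_addCommGroup
  choose S₀ hS₀ using hconv
  have htend : Tendsto (fun n c => partialSynthesis φ f n c) atTop (𝓝 S₀) :=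
    tendsto_pi_nhds.mpr fun c => by simpa only [partialSynthesis_apply] using hS₀ c
  exact ⟨continuousLinearMapOfTendsto _ htend, hS₀⟩

end Synthesis

theorem stmt10_general {E Λ : Type*}
    [AddCommGroup E] [Module ℝ E] [UniformSpace E] [IsUniformAddGroup E]
    [ContinuousSMul ℝ E] [T2Space E] [LocallyConvexSpace ℝ E]
    [AddCommGroup Λ] [Module ℝ Λ] [TopologicalSpace Λ] [IsTopologicalAddGroup Λ]
    [ContinuousSMul ℝ Λ] [BarrelledSpace ℝ Λ]
    (ι : Λ →L[ℝ] (ℕ → ℝ))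
    (e : ℕ → Λ)
    (hbasis : ∀ a : Λ,
      Tendsto (fun n => ∑ i ∈ Finset.range n, ι a i • e i) atTop (𝓝 a))
    -- `(g_i)` is `Λ`-Bessel with analysis operator `U`
    (g : ℕ → E →L[ℝ] ℝ) (U : E →L[ℝ] Λ) (hUg : ∀ x i, ι (U x) i = g i x) :
    (∃ S : Λ →L[ℝ] E, S.comp U = ContinuousLinearMap.id ℝ E) ↔
    (∃ f : ℕ → E,
      (∀ c : Λ, ∃ l : E,
        Tendsto (fun n => ∑ i ∈ Finset.range n, ι c i • f i) atTop (𝓝 l)) ∧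
      (∀ x : E,
        Tendsto (fun n => ∑ i ∈ Finset.range n, g i x • f i) atTop (𝓝 x))) := by
  constructor
  · rintro ⟨S, hS⟩
    have hSU : ∀ x, S (U x) = x := fun x => congrArg (· x) hS
    refine ⟨fun i => S (e i), fun c => ⟨S c, S.tendsto_sum_smul_map (hbasis c)⟩, fun x => ?_⟩
    simpa only [hUg, hSU] using S.tendsto_sum_smul_map (hbasis (U x))
  · rintro ⟨f, hconv, hrep⟩
    obtain ⟨S, hS⟩ := exists_continuousLinearMap_tendsto_sum_smul
      (fun i => (ContinuousLinearMap.proj i).comp ι) f hconv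
    refine ⟨S, ContinuousLinearMap.ext fun x => tendsto_nhds_unique (hS (U x)) ?_⟩
    simpa only [ContinuousLinearMap.comp_apply, ContinuousLinearMap.proj_apply,
      ContinuousLinearMap.id_apply, hUg] using hrep x

theorem stmt10 {E Λ : Type*}
    [AddCommGroup E] [Module ℝ E] [UniformSpace E] [IsUniformAddGroup E]
    [ContinuousSMul ℝ E] [CompleteSpace E] [T2Space E] [LocallyConvexSpace ℝ E]
    [BarrelledSpace ℝ E]
    [AddCommGroup Λ] [Module ℝ Λ] [TopologicalSpace Λ] [IsTopologicalAddGroup Λ]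
    [ContinuousSMul ℝ Λ] [T2Space Λ] [LocallyConvexSpace ℝ Λ] [BarrelledSpace ℝ Λ]
    (ι : Λ →L[ℝ] (ℕ → ℝ)) (hι : Function.Injective ι)
    (hφ : ∀ y : ℕ → ℝ, (Function.support y).Finite → ∃ a : Λ, ι a = y)
    (e : ℕ → Λ) (he : ∀ i, ι (e i) = Pi.single i 1)
    (hbasis : ∀ a : Λ,
      Tendsto (fun n => ∑ i ∈ Finset.range n, ι a i • e i) atTop (𝓝 a))
    -- `(g_i)` is `Λ`-Bessel with analysis operator `U`
    (g : ℕ → E →L[ℝ] ℝ) (U : E →L[ℝ] Λ) (hUg : ∀ x i, ι (U x) i = g i x) :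
    (∃ S : Λ →L[ℝ] E, S.comp U = ContinuousLinearMap.id ℝ E) ↔
    (∃ f : ℕ → E,
      (∀ c : Λ, ∃ l : E,
        Tendsto (fun n => ∑ i ∈ Finset.range n, ι c i • f i) atTop (𝓝 l)) ∧
      (∀ x : E,
        Tendsto (fun n => ∑ i ∈ Finset.range n, g i x • f i) atTop (𝓝 x))) :=
  stmt10_general ι e hbasis g U hUg
end

section
/- Let E be a barrelled and complete locally convex space, Λ a barrelled sequence space whose unit vectors form a Schauder basis, and (g_i) ⊆ E' a Λ-Bessel sequence which is a frame for E with respect to Λ, witnessed by a continuous S : Λ → E with S ∘ U = id_E. Set f_i := S(e_i). Then for every x' ∈ E', the sequence (x'(f_i))_i belongs to Λ' = Λ^β, and the map E'_β → Λ'_β, x' ↦ (x'(f_i))_i, is continuous; that is, (f_i), viewed in E'', is a Λ'-Bessel sequence for E'. -/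
open Filter Topology

/-- The β-dual of the sequence space `Λ` embedded in `ω = ℝ^ℕ` by `ι`. -/
def betaDual {Λ : Type*} [AddCommGroup Λ] [Module ℝ Λ] [TopologicalSpace Λ]
    (ι : Λ →L[ℝ] (ℕ → ℝ)) : Set (ℕ → ℝ) :=
  {y | ∀ a : Λ, ∃ s : ℝ,
    Tendsto (fun n => ∑ i ∈ Finset.range n, ι a i * y i) atTop (𝓝 s)}

/-- The identification `Λ' ⊆ Λ^β`, `h ↦ (h e_i)_i`, for a space with a Schauder basis. -/
theorem apply_basis_mem_betaDual {Λ : Type*}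
    [AddCommGroup Λ] [Module ℝ Λ] [TopologicalSpace Λ]
    (ι : Λ →L[ℝ] (ℕ → ℝ)) (e : ℕ → Λ)
    (hbasis : ∀ a : Λ, Tendsto (fun n => ∑ i ∈ Finset.range n, ι a i • e i) atTop (𝓝 a))
    (h : Λ →L[ℝ] ℝ) : (fun i => h (e i)) ∈ betaDual ι := fun a =>
  ⟨h a, ((h.continuous.tendsto a).comp (hbasis a)).congr fun n => by
    simp only [Function.comp_apply, map_sum, map_smul, smul_eq_mul]⟩

theorem stmt11_general {E Λ : Type*}
    [AddCommGroup E] [Module ℝ E] [UniformSpace E]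
    [AddCommGroup Λ] [Module ℝ Λ] [TopologicalSpace Λ]
    (ι : Λ →L[ℝ] (ℕ → ℝ))
    (e : ℕ → Λ)
    (hbasis : ∀ a : Λ,
      Tendsto (fun n => ∑ i ∈ Finset.range n, ι a i • e i) atTop (𝓝 a))
    (S : Λ →L[ℝ] E)
    -- `f_i := S (e_i)`
    (f : ℕ → E) (hf : ∀ i, f i = S (e i)) :
    (∀ x' : E →L[ℝ] ℝ, (fun i => x' (f i)) ∈ betaDual ι) ∧
      Continuous (fun x' : E →L[ℝ] ℝ => x'.comp S) := by
  refine ⟨fun x' => ?_, (ContinuousLinearMap.precomp ℝ S).continuous⟩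
  simpa only [hf, ContinuousLinearMap.comp_apply] using
    apply_basis_mem_betaDual ι e hbasis (x'.comp S)

theorem stmt11 {E Λ : Type*}
    [AddCommGroup E] [Module ℝ E] [UniformSpace E] [IsUniformAddGroup E]
    [ContinuousSMul ℝ E] [CompleteSpace E] [T2Space E] [LocallyConvexSpace ℝ E]
    [BarrelledSpace ℝ E]
    [AddCommGroup Λ] [Module ℝ Λ] [TopologicalSpace Λ] [IsTopologicalAddGroup Λ]
    [ContinuousSMul ℝ Λ] [T2Space Λ] [LocallyConvexSpace ℝ Λ] [BarrelledSpace ℝ Λ]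
    (ι : Λ →L[ℝ] (ℕ → ℝ)) (hι : Function.Injective ι)
    (hφ : ∀ y : ℕ → ℝ, (Function.support y).Finite → ∃ a : Λ, ι a = y)
    (e : ℕ → Λ) (he : ∀ i, ι (e i) = Pi.single i 1)
    (hbasis : ∀ a : Λ,
      Tendsto (fun n => ∑ i ∈ Finset.range n, ι a i • e i) atTop (𝓝 a))
    -- `(g_i)` is `Λ`-Bessel, a frame for `E` with respect to `Λ`, witnessed by `S`
    (g : ℕ → E →L[ℝ] ℝ) (U : E →L[ℝ] Λ) (hUg : ∀ x i, ι (U x) i = g i x)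
    (S : Λ →L[ℝ] E) (hS : S.comp U = ContinuousLinearMap.id ℝ E)
    -- `f_i := S (e_i)`
    (f : ℕ → E) (hf : ∀ i, f i = S (e i)) :
    (∀ x' : E →L[ℝ] ℝ, (fun i => x' (f i)) ∈ betaDual ι) ∧
      Continuous (fun x' : E →L[ℝ] ℝ => x'.comp S) :=
  stmt11_general ι e hbasis S f hf
end
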